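/- arXiv:1106.2365 — 2 statements merged into one kernel-verified Lean document; each statement's English description precedes it below -/
import Mathlib

section
/- Let V = ℝ² with an inner product for which {v₁, v₂} is an orthonormal basis. Suppose Δ₁, Δ₂ ⊆ V are cones (closed under positive scalar multiplication) with 0 < ε₁, ε₂ < 1 such that ⟨x, vᵢ⟩² ≤ εᵢ‖x‖² for all nonzero x ∈ Δᵢ (i = 1, 2). Choose λ > 0 with λ⁴ > ε₁ε₂ / ((1-ε₁)(1-ε₂)), and define the linear map ρ: V → V by ρ(v₁) = (1/λ)v₁ and ρ(v₂) = λv₂. Then Δ₁ ∩ ρ⁻¹(Δ₂) ⊆ {0}; equivalently, ρ maps every nonzero element of Δ₁ outside Δ₂. -/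
/-!
Write `x = a v₁ + b v₂`. The cone condition on `x ∈ Δ₁` reads `(1 - ε₁) a² ≤ ε₁ b²`, and since
`ρ x = (a / λ) v₁ + λ b v₂`, the one on `ρ x ∈ Δ₂` reads `(1 - ε₂) λ⁴ b² ≤ ε₂ a²`. Multiplying them
gives `λ⁴ (1 - ε₁) (1 - ε₂) a² b² ≤ ε₁ ε₂ a² b²`, so the choice of `λ` forces `a b = 0`, and then
either inequality alone forces `a = b = 0`.
-/

open scoped RealInnerProductSpace

namespace OrthonormalBasis

variable {ι 𝕜 E : Type*} [Fintype ι] [RCLike 𝕜] [NormedAddCommGroup E] [InnerProductSpace 𝕜 E]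
  (b : OrthonormalBasis ι 𝕜 E) {f : E →ₗ[𝕜] E} {μ : ι → 𝕜}

theorem inner_map_of_apply_eq_smul (hf : ∀ i, f (b i) = μ i • b i) (i : ι) (x : E) :
    inner 𝕜 (b i) (f x) = μ i * inner 𝕜 (b i) x := by
  classical
  have key : (innerₛₗ 𝕜 (b i)).comp f = μ i • innerₛₗ 𝕜 (b i) := by
    refine b.toBasis.ext fun j => ?_
    simp only [b.coe_toBasis, LinearMap.comp_apply, hf, LinearMap.smul_apply,
      innerₛₗ_apply_apply, inner_smul_right, b.inner_eq_ite, smul_eq_mul]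
    split_ifs with hij
    · rw [hij]
    · simp
  exact LinearMap.congr_fun key x

theorem injective_of_apply_eq_smul (hf : ∀ i, f (b i) = μ i • b i) (hμ : ∀ i, μ i ≠ 0) :
    Function.Injective f := by
  refine (injective_iff_map_eq_zero f).mpr fun x hx => ?_
  have hcoord (i : ι) : inner 𝕜 (b i) x = 0 := by
    simpa [hx, hμ i] using b.inner_map_of_apply_eq_smul hf i x
  rw [← b.sum_repr' x]
  simp [hcoord]

end OrthonormalBasis

theorem eq_zero_of_sq_le_of_rescaled_sq_le {a b lam ε₁ ε₂ : ℝ} (hlam : lam ≠ 0)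
    (hε₁ : ε₁ < 1) (hε₂ : ε₂ < 1) (hlam4 : ε₁ * ε₂ / ((1 - ε₁) * (1 - ε₂)) < lam ^ 4)
    (h₁ : a ^ 2 ≤ ε₁ * (a ^ 2 + b ^ 2))
    (h₂ : (lam * b) ^ 2 ≤ ε₂ * ((lam⁻¹ * a) ^ 2 + (lam * b) ^ 2)) :
    a = 0 ∧ b = 0 := by
  have hl4 : 0 < lam ^ 4 := by positivity
  have hδ₁ : 0 < 1 - ε₁ := by linarith
  have hδ₂ : 0 < 1 - ε₂ := by linarith
  have h₁' : (1 - ε₁) * a ^ 2 ≤ ε₁ * b ^ 2 := by linarith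
  have h₂' : (1 - ε₂) * lam ^ 4 * b ^ 2 ≤ ε₂ * a ^ 2 := by
    have hinv : lam ^ 2 * (lam⁻¹ * a) ^ 2 = a ^ 2 := by field_simp
    nlinarith [mul_le_mul_of_nonneg_left h₂ (sq_nonneg lam)]
  have hprod : ε₁ * ε₂ < lam ^ 4 * ((1 - ε₁) * (1 - ε₂)) := by
    rwa [div_lt_iff₀ (by positivity)] at hlam4
  have hab : a ^ 2 * b ^ 2 = 0 := by
    have := mul_le_mul h₁' h₂' (by positivity) (le_trans (by positivity) h₁')
    nlinarith [mul_nonneg (sq_nonneg a) (sq_nonneg b)]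
  rcases mul_eq_zero.mp hab with ha | hb
  · obtain rfl : a = 0 := pow_eq_zero_iff two_ne_zero |>.mp ha
    exact ⟨rfl, pow_eq_zero_iff two_ne_zero |>.mp (by nlinarith [mul_pos hδ₂ hl4, sq_nonneg b])⟩
  · obtain rfl : b = 0 := pow_eq_zero_iff two_ne_zero |>.mp hb
    exact ⟨pow_eq_zero_iff two_ne_zero |>.mp (by nlinarith [sq_nonneg a]), rfl⟩

theorem stmt3_general (V : Type*) [NormedAddCommGroup V] [InnerProductSpace ℝ V]
    (hdim : Module.finrank ℝ V = 2)
    (v₁ v₂ : V) (hv₁ : ‖v₁‖ = 1) (hv₂ : ‖v₂‖ = 1) (horth : ⟪v₁, v₂⟫ = 0)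
    (Δ₁ Δ₂ : Set V)
    (ε₁ ε₂ : ℝ) (hε₁' : ε₁ < 1) (hε₂' : ε₂ < 1)
    (hsep₁ : ∀ x ∈ Δ₁, x ≠ 0 → ⟪x, v₁⟫ ^ 2 ≤ ε₁ * ‖x‖ ^ 2)
    (hsep₂ : ∀ x ∈ Δ₂, x ≠ 0 → ⟪x, v₂⟫ ^ 2 ≤ ε₂ * ‖x‖ ^ 2)
    (lam : ℝ) (hlam : 0 < lam)
    (hlam4 : ε₁ * ε₂ / ((1 - ε₁) * (1 - ε₂)) < lam ^ 4)
    (ρ : V →ₗ[ℝ] V) (hρ₁ : ρ v₁ = (1 / lam) • v₁) (hρ₂ : ρ v₂ = lam • v₂) :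
    ∀ x ∈ Δ₁, x ≠ 0 → ρ x ∉ Δ₂ := by
  have hon : Orthonormal ℝ ![v₁, v₂] := by simp [hv₁, hv₂, horth]
  let b := OrthonormalBasis.mk hon
    (hon.linearIndependent.span_eq_top_of_card_eq_finrank (by simp [hdim])).ge
  have hb : ⇑b = ![v₁, v₂] := OrthonormalBasis.coe_mk hon _
  have hρb : ∀ i, ρ (b i) = ![lam⁻¹, lam] i • b i := by
    intro i; fin_cases i <;> simp [hb, hρ₁, hρ₂]
  have hnorm (y : V) : ‖y‖ ^ 2 = ⟪y, v₁⟫ ^ 2 + ⟪y, v₂⟫ ^ 2 := by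
    simp [← b.sum_sq_inner_left, Fin.sum_univ_two, hb]
  have hcoord (y : V) (i : Fin 2) : ⟪ρ y, b i⟫ = ![lam⁻¹, lam] i * ⟪y, b i⟫ := by
    rw [real_inner_comm, b.inner_map_of_apply_eq_smul hρb, real_inner_comm]
  intro x hx hx0 hρx
  have hρx0 : ρ x ≠ 0 := (map_ne_zero_iff ρ (b.injective_of_apply_eq_smul hρb
    (by simp [Fin.forall_fin_two, hlam.ne']))).mpr hx0
  have hρx₁ : ⟪ρ x, v₁⟫ = lam⁻¹ * ⟪x, v₁⟫ := by simpa [hb] using hcoord x 0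
  have hρx₂ : ⟪ρ x, v₂⟫ = lam * ⟪x, v₂⟫ := by simpa [hb] using hcoord x 1
  have h₁ := hsep₁ x hx hx0
  have h₂ := hsep₂ (ρ x) hρx hρx0
  rw [hnorm] at h₁ h₂
  rw [hρx₁, hρx₂] at h₂
  obtain ⟨h₁0, h₂0⟩ := eq_zero_of_sq_le_of_rescaled_sq_le hlam.ne' hε₁' hε₂' hlam4 h₁ h₂
  exact hx0 (by simpa [h₁0, h₂0] using hnorm x)

/-- The 2-dimensional separation argument of Theorem B(2): a diagonal linear map with
eigenvalues `1/λ, λ` (for suitable `λ`) moves the cone `Δ₁` off the cone `Δ₂`. -/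
theorem stmt3 (V : Type*) [NormedAddCommGroup V] [InnerProductSpace ℝ V]
    (hdim : Module.finrank ℝ V = 2)
    (v₁ v₂ : V) (hv₁ : ‖v₁‖ = 1) (hv₂ : ‖v₂‖ = 1) (horth : ⟪v₁, v₂⟫ = 0)
    (Δ₁ Δ₂ : Set V)
    (hcone₁ : ∀ x ∈ Δ₁, ∀ t : ℝ, 0 < t → t • x ∈ Δ₁)
    (hcone₂ : ∀ x ∈ Δ₂, ∀ t : ℝ, 0 < t → t • x ∈ Δ₂)
    (ε₁ ε₂ : ℝ) (hε₁ : 0 < ε₁) (hε₁' : ε₁ < 1) (hε₂ : 0 < ε₂) (hε₂' : ε₂ < 1)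
    (hsep₁ : ∀ x ∈ Δ₁, x ≠ 0 → ⟪x, v₁⟫ ^ 2 ≤ ε₁ * ‖x‖ ^ 2)
    (hsep₂ : ∀ x ∈ Δ₂, x ≠ 0 → ⟪x, v₂⟫ ^ 2 ≤ ε₂ * ‖x‖ ^ 2)
    (lam : ℝ) (hlam : 0 < lam)
    (hlam4 : ε₁ * ε₂ / ((1 - ε₁) * (1 - ε₂)) < lam ^ 4)
    (ρ : V →ₗ[ℝ] V) (hρ₁ : ρ v₁ = (1 / lam) • v₁) (hρ₂ : ρ v₂ = lam • v₂) :
    ∀ x ∈ Δ₁, x ≠ 0 → ρ x ∉ Δ₂ :=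
  stmt3_general V hdim v₁ v₂ hv₁ hv₂ horth Δ₁ Δ₂ ε₁ ε₂ hε₁' hε₂' hsep₁ hsep₂ lam hlam hlam4 ρ hρ₁
    hρ₂
end

section
/- Let V be a finite-dimensional real vector space and Δ a closed convex polyhedral cone in V (finite intersection of closed half-spaces through the origin). Then the set of k-dimensional linear subspaces W of V with W ∩ Δ = {0} is an open subset of the Grassmannian of k-dimensional subspaces of V. -/
open scoped RealInnerProductSpace

variable (k : ℕ) (V : Type*) [NormedAddCommGroup V] [InnerProductSpace ℝ V]

/-- Linearly independent `k`-tuples in `V`, up to equality of spans: the points of the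
Grassmannian of `k`-dimensional subspaces of `V`. -/
def grassSetoid : Setoid { v : Fin k → V // LinearIndependent ℝ v } where
  r a b := Submodule.span ℝ (Set.range (a : Fin k → V)) =
    Submodule.span ℝ (Set.range (b : Fin k → V))
  iseqv := ⟨fun _ => rfl, Eq.symm, Eq.trans⟩

/-- The Grassmannian of `k`-dimensional subspaces of `V`, as the quotient of the space of
linearly independent `k`-tuples (with its natural topology) by equality of spans; it carries
the quotient topology, which is the usual manifold topology. -/
def Grassmannian := Quotient (grassSetoid k V)

instance : TopologicalSpace (Grassmannian k V) :=
  instTopologicalSpaceQuotient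

/-- The (well-defined) property of a point of the Grassmannian that the corresponding
`k`-dimensional subspace meets the set `Δ` only in `0`. -/
def avoids (Δ : Set V) : Grassmannian k V → Prop :=
  Quotient.lift
    (fun v : { v : Fin k → V // LinearIndependent ℝ v } =>
      ∀ y ∈ Submodule.span ℝ (Set.range (v : Fin k → V)), y ∈ Δ → y = 0)
    (fun a b h => by
      try dsimp only
      rw [show Submodule.span ℝ (Set.range (a : Fin k → V)) =
        Submodule.span ℝ (Set.range (b : Fin k → V)) from h])

/-! A linearly independent tuple `v` spans a subspace meeting the cone `Δ` only in `0` iff no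
combination `∑ cᵢ vᵢ` with `c` on the unit sphere lies in `Δ`: normalize the coefficients,
using that `Δ` is stable under positive scaling. Since `Δ` is closed and the sphere is compact,
the tube lemma makes the latter condition open in `v`, and openness descends to the quotient
topology of the Grassmannian. -/

open Set Metric Filter Topology

section LinearCombinationsOnSphere

variable {ι E : Type*} [Fintype ι] [AddCommGroup E] [Module ℝ E]

theorem isOpen_setOf_forall_sphere_sum_smul_notMem [TopologicalSpace E] [ContinuousAdd E]
    [ContinuousSMul ℝ E] {Δ : Set E} (hΔ : IsClosed Δ) :
    IsOpen {v : ι → E | ∀ c ∈ sphere (0 : ι → ℝ) 1, ∑ i, c i • v i ∉ Δ} := by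
  have hcont : Continuous fun p : (ι → E) × (ι → ℝ) => ∑ i, p.2 i • p.1 i := by fun_prop
  refine isOpen_iff_eventually.mpr fun v₀ hv₀ => ?_
  exact (isCompact_sphere _ _).eventually_forall_of_forall_eventually fun c hc =>
    (hΔ.isOpen_compl.preimage hcont).mem_nhds (hv₀ c hc)

theorem forall_mem_span_range_imp_eq_zero_iff {v : ι → E} (hv : LinearIndependent ℝ v)
    {Δ : Set E} (hcone : ∀ t : ℝ, 0 < t → ∀ y ∈ Δ, t • y ∈ Δ) :
    (∀ y ∈ Submodule.span ℝ (range v), y ∈ Δ → y = 0) ↔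
      ∀ c ∈ sphere (0 : ι → ℝ) 1, ∑ i, c i • v i ∉ Δ := by
  constructor
  · intro h c hc hcΔ
    have hsum : ∑ i, c i • v i = 0 :=
      h _ (Submodule.sum_mem _ fun i _ => Submodule.smul_mem _ _ (Submodule.subset_span ⟨i, rfl⟩))
        hcΔ
    have hc0 : c = 0 := funext (Fintype.linearIndependent_iff.mp hv c hsum)
    simp [hc0] at hc
  · intro h y hy hyΔ
    by_contra hy0
    obtain ⟨c, rfl⟩ := (Submodule.mem_span_range_iff_exists_fun ℝ).mp hy
    have hc0 : c ≠ 0 := by rintro rfl; simp at hy0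
    have hnorm : 0 < ‖c‖ := norm_pos_iff.mpr hc0
    refine h (‖c‖⁻¹ • c) ?_ ?_
    · simp [norm_smul, hnorm.ne']
    · simpa [Finset.smul_sum, smul_smul] using hcone _ (inv_pos.mpr hnorm) _ hyΔ

end LinearCombinationsOnSphere

theorem isOpen_setOf_avoids {Δ : Set V} (hΔ : IsClosed Δ)
    (hcone : ∀ t : ℝ, 0 < t → ∀ y ∈ Δ, t • y ∈ Δ) :
    IsOpen {x : Grassmannian k V | avoids k V Δ x} := by
  have hpre : Quotient.mk (grassSetoid k V) ⁻¹' {x | avoids k V Δ x} =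
      Subtype.val ⁻¹' {v : Fin k → V | ∀ c ∈ sphere (0 : Fin k → ℝ) 1, ∑ i, c i • v i ∉ Δ} := by
    ext ⟨v, hv⟩
    exact forall_mem_span_range_imp_eq_zero_iff hv hcone
  exact isOpen_coinduced.mpr
    (hpre ▸ (isOpen_setOf_forall_sphere_sum_smul_notMem hΔ).preimage continuous_subtype_val)

theorem isClosed_setOf_forall_inner_nonneg {ι : Type*} (η : ι → V) :
    IsClosed {y : V | ∀ i, 0 ≤ ⟪y, η i⟫} := by
  simp only [ofPred_forall]
  exact isClosed_iInter fun i => isClosed_le continuous_const (continuous_id.inner continuous_const)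

theorem stmt4 (r : ℕ) (η : Fin r → V) :
    IsOpen { x : Grassmannian k V | avoids k V { y : V | ∀ i, 0 ≤ ⟪y, η i⟫ } x } :=
  isOpen_setOf_avoids k V (isClosed_setOf_forall_inner_nonneg V η) fun t ht y hy i => by
    simpa only [real_inner_smul_left] using mul_nonneg ht.le (hy i)
end
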